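/- arXiv:1309.2251 — 2 statements merged into one kernel-verified Lean document; each statement's English description precedes it below -/
import Mathlib

section
/- Define α_1 = Γ_1 = 1 and for t ≥ 2 let α_t ∈ (0,1] be the solution of α_t² = (1 - α_t)Γ_{t-1}, with Γ_t = α_t². Then α_t ∈ (0,1] for all t, and the conditions α_t²/Γ_t ≤ 1, Γ_t ≤ 4/t², and Γ_t·(∑_{τ=1}^t (α_τ/Γ_τ)²)^{1/2} ≤ 4/√(3t) hold for all t ≥ 1. -/
open scoped BigOperators


lemma sumsq_formula (t : ℕ) :
    ∑ τ ∈ Finset.Icc 1 t, ((τ : ℝ)) ^ 2 = t * (t + 1) * (2 * t + 1) / 6 := by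
  induction t with
  | zero => simp
  | succ n ih =>
    rw [Finset.sum_Icc_succ_top (by omega : 1 ≤ n + 1), ih]
    push_cast
    ring

lemma invariant (α Γ : ℕ → ℝ)
    (hα1 : α 1 = 1) (hΓ1 : Γ 1 = 1)
    (hpos : ∀ t : ℕ, 2 ≤ t → 0 < α t)
    (heq : ∀ t : ℕ, 2 ≤ t → α t ^ 2 = (1 - α t) * Γ (t - 1))
    (hΓ : ∀ t : ℕ, 2 ≤ t → Γ t = α t ^ 2) :
    ∀ t : ℕ, 1 ≤ t →
      (0 < α t ∧ α t ≤ 1) ∧ 1 ≤ Γ t * (t : ℝ) ^ 2 ∧ Γ t * ((t : ℝ) + 1) ^ 2 ≤ 4 := by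
  intro t ht
  induction t, ht using Nat.le_induction with
  | base => rw [hα1, hΓ1]; norm_num
  | succ t ht ih =>
    obtain ⟨⟨ha0, ha1⟩, hlo, hhi⟩ := ih
    set n : ℝ := (t : ℝ) with hn
    have hn1 : (1:ℝ) ≤ n := Nat.one_le_cast.mpr ht
    have ha : 0 < α (t + 1) := hpos _ (by omega)
    have heq' : α (t + 1) ^ 2 = (1 - α (t + 1)) * Γ t := by
      have := heq (t + 1) (by omega)
      simpa using this
    set a : ℝ := α (t + 1) with hadef
    have hΓpos : 0 < Γ t := by nlinarith [sq_nonneg n]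
    have h1a : a < 1 := by
      by_contra h
      push_neg at h
      nlinarith [mul_pos ha ha]
    have hA : a ^ 2 * (n + 1) ^ 2 ≤ 4 * (1 - a) := by
      calc a ^ 2 * (n + 1) ^ 2 = (1 - a) * (Γ t * (n + 1) ^ 2) := by rw [heq']; ring
        _ ≤ (1 - a) * 4 := by
            apply mul_le_mul_of_nonneg_left hhi (by linarith)
        _ = 4 * (1 - a) := by ring
    have hB : 1 - a ≤ a ^ 2 * n ^ 2 := by
      calc 1 - a = (1 - a) * 1 := by ring
        _ ≤ (1 - a) * (Γ t * n ^ 2) := by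
            apply mul_le_mul_of_nonneg_left hlo (by linarith)
        _ = a ^ 2 * n ^ 2 := by rw [heq']; ring
    have hub : a * (n + 2) ≤ 2 := by
      by_contra h
      push_neg at h
      nlinarith [mul_pos (show (0:ℝ) < a * (n+2) - 2 by linarith)
          (show (0:ℝ) < a * (n+2) - 2 by linarith),
        mul_pos (show (0:ℝ) < a * (n+2) - 2 by linarith) ha,
        mul_pos ha (show (0:ℝ) < n by linarith)]
    have hlb : 1 ≤ a * (n + 1) := by
      by_contra h
      push_neg at h
      have han1 : 0 < a * (n + 1) := by positivity
      nlinarith [mul_pos han1 han1, mul_pos han1 (show (0:ℝ) < 1 - a * (n+1) by linarith)]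
    have hΓt1 : Γ (t + 1) = a ^ 2 := hΓ (t + 1) (by omega)
    have hcast : ((t + 1 : ℕ) : ℝ) = n + 1 := by push_cast [hn]; ring
    refine ⟨⟨ha, le_of_lt h1a⟩, ?_, ?_⟩
    · rw [hΓt1, hcast]
      nlinarith [mul_nonneg (le_of_lt ha) (show (0:ℝ) ≤ n + 1 by linarith)]
    · rw [hΓt1, hcast]
      nlinarith [mul_nonneg (le_of_lt ha) (show (0:ℝ) ≤ n + 2 by linarith)]

/-- stepsize policy α₁ = Γ₁ = 1, α_t² = (1 − α_t)Γ_{t-1} = Γ_t for t ≥ 2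
    (positive root): then α_t ∈ (0,1] for all t, and the stepsize conditions hold with
    C₁ = 1, C₂ = 4, C₃ = 4/√3. -/
theorem stepsize_policy_two (α Γ : ℕ → ℝ)
    (hα1 : α 1 = 1) (hΓ1 : Γ 1 = 1)
    (hpos : ∀ t : ℕ, 2 ≤ t → 0 < α t)
    (heq : ∀ t : ℕ, 2 ≤ t → α t ^ 2 = (1 - α t) * Γ (t - 1))
    (hΓ : ∀ t : ℕ, 2 ≤ t → Γ t = α t ^ 2) :
    ∀ t : ℕ, 1 ≤ t →
      (0 < α t ∧ α t ≤ 1) ∧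
      α t ^ 2 / Γ t ≤ 1 ∧
      Γ t ≤ 4 / (t : ℝ) ^ 2 ∧
      Γ t * Real.sqrt (∑ τ ∈ Finset.Icc 1 t, (α τ / Γ τ) ^ 2) ≤ 4 / Real.sqrt (3 * t) := by
  intro t ht
  have hinv := invariant α Γ hα1 hΓ1 hpos heq hΓ
  obtain ⟨hab, hlo, hhi⟩ := hinv t ht
  have hΓall : ∀ τ : ℕ, 1 ≤ τ → Γ τ = α τ ^ 2 := by
    intro τ hτ
    rcases eq_or_lt_of_le hτ with h | h
    · rw [← h, hΓ1, hα1]; norm_num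
    · exact hΓ τ h
  set n : ℝ := (t : ℝ) with hn
  have hn1 : (1:ℝ) ≤ n := Nat.one_le_cast.mpr ht
  have hΓpos : ∀ τ : ℕ, 1 ≤ τ → 0 < Γ τ := by
    intro τ hτ
    obtain ⟨_, hlo', _⟩ := hinv τ hτ
    have : (0:ℝ) < (τ:ℝ)^2 := by positivity
    nlinarith
  have hΓtpos : 0 < Γ t := hΓpos t ht
  refine ⟨hab, ?_, ?_, ?_⟩
  · rw [← hΓall t ht, div_self (ne_of_gt hΓtpos)]
  · rw [le_div_iff₀ (by positivity : (0:ℝ) < n ^ 2)]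
    nlinarith [hΓtpos.le]
  · -- sum term
    have hterm : ∀ τ ∈ Finset.Icc 1 t, (α τ / Γ τ) ^ 2 ≤ ((τ:ℝ)) ^ 2 := by
      intro τ hτ
      simp only [Finset.mem_Icc] at hτ
      have h1 : 1 ≤ τ := hτ.1
      have hΓτ : 0 < Γ τ := hΓpos τ h1
      obtain ⟨_, hlo', _⟩ := hinv τ h1
      have : (α τ / Γ τ) ^ 2 = 1 / Γ τ := by
        rw [div_pow, ← hΓall τ h1]
        field_simp
      rw [this, div_le_iff₀ hΓτ]
      linarith
    have hS0 : (0:ℝ) ≤ ∑ τ ∈ Finset.Icc 1 t, (α τ / Γ τ) ^ 2 :=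
      Finset.sum_nonneg fun τ _ => sq_nonneg _
    have hSle : ∑ τ ∈ Finset.Icc 1 t, (α τ / Γ τ) ^ 2 ≤ n * (n + 1) * (2 * n + 1) / 6 := by
      calc ∑ τ ∈ Finset.Icc 1 t, (α τ / Γ τ) ^ 2 ≤ ∑ τ ∈ Finset.Icc 1 t, ((τ:ℝ)) ^ 2 :=
            Finset.sum_le_sum hterm
        _ = n * (n + 1) * (2 * n + 1) / 6 := sumsq_formula t
    set S := ∑ τ ∈ Finset.Icc 1 t, (α τ / Γ τ) ^ 2 with hSdef
    have h3t : (0:ℝ) < 3 * n := by linarith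
    have hrhs : (0:ℝ) < 4 / Real.sqrt (3 * n) := by positivity
    have hlhs : (0:ℝ) ≤ Γ t * Real.sqrt S := by positivity
    have key : (Γ t * Real.sqrt S) ^ 2 ≤ (4 / Real.sqrt (3 * n)) ^ 2 := by
      rw [mul_pow, Real.sq_sqrt hS0, div_pow, Real.sq_sqrt h3t.le]
      rw [le_div_iff₀ h3t]
      have hG2 : Γ t ^ 2 * ((n + 1) ^ 2) ^ 2 ≤ 16 := by
        have hx : (0:ℝ) ≤ Γ t * (n + 1) ^ 2 := by positivity
        nlinarith [mul_self_le_mul_self hx hhi]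
      have hpoly : n ^ 2 * (2 * n + 1) ≤ 2 * (n + 1) ^ 3 := by nlinarith
      nlinarith [mul_le_mul_of_nonneg_left hSle (sq_nonneg (Γ t)),
        mul_le_mul_of_nonneg_left hpoly (sq_nonneg (Γ t)),
        sq_nonneg (Γ t), hS0, mul_nonneg (sq_nonneg (Γ t)) hS0]
    calc Γ t * Real.sqrt S = Real.sqrt ((Γ t * Real.sqrt S) ^ 2) := (Real.sqrt_sq hlhs).symm
      _ ≤ Real.sqrt ((4 / Real.sqrt (3 * n)) ^ 2) := Real.sqrt_le_sqrt key
      _ = 4 / Real.sqrt (3 * n) := Real.sqrt_sq hrhs.le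
end

section
/- In the gap reduction procedure, suppose x_τ = argmin{‖x - x_{τ-1}‖² : x ∈ L_τ} where each L_τ = {x : f(x_τ^l) + ⟨f'(x_τ^l), x - x_τ^l⟩ ≤ f*} contains every optimizer x* of the convex function f. Then ∑_{τ=1}^T ‖x_τ - x_{τ-1}‖² ≤ ‖x_0 - x*‖² for any optimizer x*. -/
/-!
Each prox-center `x τ` is the nearest point of the convex half-space `L τ` to `x (τ - 1)`, and
every optimizer `x*` lies in `L τ` because `g τ` is a subgradient at `xl τ` and `f x* = f*`.
The obtuse angle at a projection gives
`‖x τ - x (τ - 1)‖² + ‖x τ - x*‖² ≤ ‖x (τ - 1) - x*‖²`, and these inequalities telescope.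
-/

open scoped RealInnerProductSpace

section Projection

variable {E : Type*} [NormedAddCommGroup E] [InnerProductSpace ℝ E]

theorem convex_setOf_add_inner_sub_le (a b : ℝ) (g p : E) :
    Convex ℝ {z : E | a + ⟪g, z - p⟫ ≤ b} := by
  have hlin : IsLinearMap ℝ fun z : E => ⟪g, z⟫ :=
    ⟨fun _ _ => inner_add_right _ _ _, fun _ _ => real_inner_smul_right _ _ _⟩
  convert convex_halfSpace_le hlin (b - a + ⟪g, p⟫) using 1
  ext z
  simp only [Set.mem_ofPred_eq, inner_sub_right]
  constructor <;> intro h <;> linarith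

theorem Convex.norm_sub_sq_add_norm_sub_sq_le_of_nearest {K : Set E} (hK : Convex ℝ K)
    {u v w : E} (hv : v ∈ K) (hmin : ∀ z ∈ K, ‖v - u‖ ≤ ‖z - u‖) (hw : w ∈ K) :
    ‖v - u‖ ^ 2 + ‖v - w‖ ^ 2 ≤ ‖u - w‖ ^ 2 := by
  have hinf : ‖u - v‖ = ⨅ z : K, ‖u - z‖ := by
    have : Nonempty K := ⟨⟨v, hv⟩⟩
    refine le_antisymm (le_ciInf fun z => ?_) (ciInf_le ?_ (⟨v, hv⟩ : K))
    · simpa only [norm_sub_rev u] using hmin z z.2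
    · exact ⟨0, by rintro _ ⟨z, rfl⟩; positivity⟩
  have hobtuse : ⟪u - v, w - v⟫ ≤ 0 :=
    (norm_eq_iInf_iff_real_inner_le_zero hK hv).1 hinf w hw
  have hexpand : ‖u - w‖ ^ 2 = ‖u - v‖ ^ 2 + ‖w - v‖ ^ 2 - 2 * ⟪u - v, w - v⟫ := by
    rw [← sub_sub_sub_cancel_right u w v, norm_sub_sq_real]
    ring
  rw [hexpand, norm_sub_rev u v, norm_sub_rev w v]
  linarith

end Projection

theorem sum_Icc_add_le_of_forall_add_le {d e : ℕ → ℝ} {T : ℕ}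
    (h : ∀ τ ∈ Finset.Icc 1 T, d τ + e τ ≤ e (τ - 1)) :
    ∑ τ ∈ Finset.Icc 1 T, d τ + e T ≤ e 0 := by
  induction T with
  | zero => simp
  | succ k ih =>
    have hprev := ih fun τ hτ => h τ (Finset.Icc_subset_Icc_right k.le_succ hτ)
    have hlast := h (k + 1) (Finset.right_mem_Icc.2 k.succ_pos)
    rw [Finset.sum_Icc_succ_top k.succ_pos]
    rw [Nat.add_sub_cancel] at hlast
    linarith

theorem gap_reduction_prox_centers_bound_general (n T : ℕ)
    (f : EuclideanSpace ℝ (Fin n) → ℝ)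
    (fstar : ℝ) (Xs : Set (EuclideanSpace ℝ (Fin n)))
    (hfstar : ∀ z ∈ Xs, f z = fstar)
    (xl g x : ℕ → EuclideanSpace ℝ (Fin n))
    (hsubgrad : ∀ τ ∈ Finset.Icc 1 T, ∀ y,
      f (xl τ) + ⟪g τ, y - xl τ⟫ ≤ f y)
    (L : ℕ → Set (EuclideanSpace ℝ (Fin n)))
    (hL : ∀ τ, L τ = {z : EuclideanSpace ℝ (Fin n) | f (xl τ) + ⟪g τ, z - xl τ⟫ ≤ fstar})
    (hproj : ∀ τ ∈ Finset.Icc 1 T,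
      x τ ∈ L τ ∧ ∀ z ∈ L τ, ‖x τ - x (τ - 1)‖ ≤ ‖z - x (τ - 1)‖) :
    ∀ xstar ∈ Xs, ∑ τ ∈ Finset.Icc 1 T, ‖x τ - x (τ - 1)‖ ^ 2 ≤ ‖x 0 - xstar‖ ^ 2 := by
  intro xstar hxstar
  have hstep : ∀ τ ∈ Finset.Icc 1 T,
      ‖x τ - x (τ - 1)‖ ^ 2 + ‖x τ - xstar‖ ^ 2 ≤ ‖x (τ - 1) - xstar‖ ^ 2 := by
    intro τ hτ
    obtain ⟨hxτ, hnearest⟩ := hproj τ hτ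
    have hxstarL : xstar ∈ L τ := by
      rw [hL τ]
      exact (hsubgrad τ hτ xstar).trans_eq (hfstar xstar hxstar)
    have hconvex : Convex ℝ (L τ) := hL τ ▸ convex_setOf_add_inner_sub_le _ _ _ _
    exact hconvex.norm_sub_sq_add_norm_sub_sq_le_of_nearest hxτ hnearest hxstarL
  have htelescope := sum_Icc_add_le_of_forall_add_le hstep
  linarith [sq_nonneg ‖x T - xstar‖]

/-- in the gap reduction procedure, the prox-centers x_τ (successive
    projections onto the level sets of the linearizations, each containing the optimal
    set) satisfy ∑_{τ=1}^T ‖x_τ − x_{τ-1}‖² ≤ ‖x₀ − x*‖² for any optimizer x*. -/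
theorem gap_reduction_prox_centers_bound (n T : ℕ)
    (f : EuclideanSpace ℝ (Fin n) → ℝ) (hconv : ConvexOn ℝ Set.univ f)
    (fstar : ℝ) (Xs : Set (EuclideanSpace ℝ (Fin n)))
    (hXs : Xs = {z : EuclideanSpace ℝ (Fin n) | ∀ y, f z ≤ f y}) (hne : Xs.Nonempty)
    (hfstar : ∀ z ∈ Xs, f z = fstar)
    (xl g x : ℕ → EuclideanSpace ℝ (Fin n))
    (hsubgrad : ∀ τ ∈ Finset.Icc 1 T, ∀ y,
      f (xl τ) + ⟪g τ, y - xl τ⟫ ≤ f y)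
    (L : ℕ → Set (EuclideanSpace ℝ (Fin n)))
    (hL : ∀ τ, L τ = {z : EuclideanSpace ℝ (Fin n) | f (xl τ) + ⟪g τ, z - xl τ⟫ ≤ fstar})
    (hproj : ∀ τ ∈ Finset.Icc 1 T,
      x τ ∈ L τ ∧ ∀ z ∈ L τ, ‖x τ - x (τ - 1)‖ ≤ ‖z - x (τ - 1)‖) :
    ∀ xstar ∈ Xs, ∑ τ ∈ Finset.Icc 1 T, ‖x τ - x (τ - 1)‖ ^ 2 ≤ ‖x 0 - xstar‖ ^ 2 :=
  gap_reduction_prox_centers_bound_general n T f fstar Xs hfstar xl g x hsubgrad L hL hproj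
end
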